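/- arXiv:2308.11083 — 3 statements merged into one kernel-verified Lean document; each statement's English description precedes it below -/
import Mathlib

section
/- Let δ ∈ (0,1), ε ∈ (0,1) with n·δ an integer, and let ε̃ = ε·δ/(1-δ). Define the vector r ∈ ℝ^n by r_i = (1-ε)/n for i ≤ n·δ and r_i = (1+ε̃)/n otherwise. Then r is a probability vector, and for any probability vector p satisfying condition C1 with parameters δ and ε (that is, ∑_{i=1}^{k} p_i ≤ (1-ε)·k/n for 1 ≤ k ≤ n·δ and ∑_{i=k}^{n} p_i ≥ (1+ε̃)·(n-k+1)/n for n·δ+1 ≤ k ≤ n), r majorizes p, i.e., ∑_{i=1}^{k} r_i ≥ ∑_{i=1}^{k} p_i for all 1 ≤ k ≤ n. -/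
open Finset

lemma wcv_split (n : ℕ) (f : ℕ → ℝ) (k : ℕ) (hk : k ≤ n) :
    (∑ i ∈ Finset.Icc 1 k, f i) + ∑ i ∈ Finset.Icc (k+1) n, f i
      = ∑ i ∈ Finset.Icc 1 n, f i := by
  rw [show Finset.Icc 1 k = Finset.Ioc 0 k from (Finset.Icc_add_one_left_eq_Ioc 0 k),
      show Finset.Icc 1 n = Finset.Ioc 0 n from (Finset.Icc_add_one_left_eq_Ioc 0 n),
      show Finset.Icc (k+1) n = Finset.Ioc k n from (Finset.Icc_add_one_left_eq_Ioc k n)]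
  exact Finset.sum_Ioc_consecutive f (Nat.zero_le k) hk

/-- The two-valued worst-case vector r is a probability vector and
majorizes every probability vector p satisfying condition C1 with parameters δ, ε. -/
theorem worst_case_vector_majorizes
    (n nδ : ℕ) (hn : 0 < n) (δ ε : ℝ)
    (hδ : δ ∈ Set.Ioo (0:ℝ) 1) (hε : ε ∈ Set.Ioo (0:ℝ) 1)
    (hnδ : (nδ : ℝ) = n * δ)
    (r : ℕ → ℝ)
    (hr : ∀ i ∈ Finset.Icc 1 n,
      r i = if i ≤ nδ then (1 - ε) / n else (1 + ε * δ / (1 - δ)) / n) :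
    (∑ i ∈ Finset.Icc 1 n, r i = 1) ∧ (∀ i ∈ Finset.Icc 1 n, 0 ≤ r i) ∧
    (∀ p : ℕ → ℝ,
      (∑ i ∈ Finset.Icc 1 n, p i = 1) →
      (∀ i ∈ Finset.Icc 1 n, 0 ≤ p i ∧ p i ≤ 1) →
      (∀ k : ℕ, 1 ≤ k → k ≤ nδ →
        ∑ i ∈ Finset.Icc 1 k, p i ≤ (1 - ε) * k / n) →
      (∀ k : ℕ, nδ + 1 ≤ k → k ≤ n →
        ∑ i ∈ Finset.Icc k n, p i ≥ (1 + ε * δ / (1 - δ)) * ((n : ℝ) - k + 1) / n) →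
      ∀ k : ℕ, 1 ≤ k → k ≤ n →
        ∑ i ∈ Finset.Icc 1 k, p i ≤ ∑ i ∈ Finset.Icc 1 k, r i) := by
  obtain ⟨hδ0, hδ1⟩ := hδ
  obtain ⟨hε0, hε1⟩ := hε
  have hn0 : (0:ℝ) < n := by exact_mod_cast hn
  have h1δ : (0:ℝ) < 1 - δ := by linarith
  have he0 : 0 ≤ ε * δ / (1 - δ) := by positivity
  have hnδ1 : 1 ≤ nδ := by
    have h : (0:ℝ) < (nδ:ℝ) := by rw [hnδ]; positivity
    exact_mod_cast h
  have hnδn : nδ < n := by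
    have h : (nδ:ℝ) < (n:ℝ) := by rw [hnδ]; nlinarith
    exact_mod_cast h
  -- low sums of r
  have sumr_low : ∀ k : ℕ, 1 ≤ k → k ≤ nδ →
      ∑ i ∈ Finset.Icc 1 k, r i = (k:ℝ) * (1 - ε) / n := by
    intro k hk1 hk2
    have : ∀ i ∈ Finset.Icc 1 k, r i = (1 - ε) / n := by
      intro i hi
      rw [Finset.mem_Icc] at hi
      rw [hr i (Finset.mem_Icc.2 ⟨hi.1, le_trans hi.2 (le_trans hk2 hnδn.le)⟩),
          if_pos (le_trans hi.2 hk2)]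
    rw [Finset.sum_congr rfl this, Finset.sum_const, Nat.card_Icc]
    simp only [Nat.add_sub_cancel, nsmul_eq_mul]
    ring
  -- high sums of r
  have sumr_high : ∀ k : ℕ, nδ + 1 ≤ k → k ≤ n →
      ∑ i ∈ Finset.Icc k n, r i = ((n:ℝ) - k + 1) * (1 + ε * δ / (1 - δ)) / n := by
    intro k hk1 hk2
    have : ∀ i ∈ Finset.Icc k n, r i = (1 + ε * δ / (1 - δ)) / n := by
      intro i hi
      rw [Finset.mem_Icc] at hi
      rw [hr i (Finset.mem_Icc.2 ⟨le_trans (le_trans (Nat.le_add_right 1 nδ)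
            (by omega)) hi.1, hi.2⟩), if_neg (by omega)]
    rw [Finset.sum_congr rfl this, Finset.sum_const, Nat.card_Icc]
    have hc : ((n + 1 - k : ℕ) : ℝ) = (n:ℝ) - k + 1 := by
      have : k ≤ n + 1 := by omega
      push_cast [Nat.cast_sub this]
      ring
    rw [nsmul_eq_mul, hc]
    ring
  have key : (nδ:ℝ) * (1 - ε) + ((n:ℝ) - nδ) * (1 + ε * δ / (1 - δ)) = n := by
    rw [hnδ]
    field_simp
    ring
  -- total sum = 1
  have total : ∑ i ∈ Finset.Icc 1 n, r i = 1 := by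
    rw [← wcv_split n r nδ hnδn.le, sumr_low nδ hnδ1 le_rfl,
        sumr_high (nδ+1) le_rfl (by omega)]
    push_cast
    field_simp
    linear_combination (-ε) * hnδ
  refine ⟨total, ?_, ?_⟩
  · intro i hi
    rw [hr i hi]
    have h1ε : (0:ℝ) ≤ 1 - ε := by linarith
    split
    · positivity
    · positivity
  · intro p hp1 hp01 hC1 hC2 k hk1 hkn
    by_cases hk : k ≤ nδ
    · rw [sumr_low k hk1 hk,
        show (k:ℝ) * (1 - ε) / n = (1 - ε) * k / n from by ring]
      exact hC1 k hk1 hk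
    · push_neg at hk
      by_cases hkn' : k = n
      · subst hkn'
        rw [total, hp1]
      · have hklt : k < n := lt_of_le_of_ne hkn hkn'
        have h2 := hC2 (k+1) (by omega) (by omega)
        have hsp := wcv_split n p k hkn
        have hsr := wcv_split n r k hkn
        rw [show Finset.Icc (k+1) n = Finset.Icc ((k+1):ℕ) n from rfl] at hsr
        have hrh := sumr_high (k+1) (by omega) (by omega)
        have hcast : ((k+1 : ℕ):ℝ) = (k:ℝ) + 1 := by push_cast; ring
        rw [hrh] at hsr
        rw [hp1] at hsp
        rw [total] at hsr
        rw [hcast] at hsr h2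
        rw [show (1 + ε * δ / (1 - δ)) * ((n:ℝ) - ((k:ℝ) + 1) + 1) / n
            = ((n:ℝ) - ((k:ℝ) + 1) + 1) * (1 + ε * δ / (1 - δ)) / n from by ring] at h2
        linarith [h2, hsp, hsr]
end

section
/- Let p be a probability vector on n bins satisfying condition C1 for constant δ ∈ (0,1) and ε ∈ (0,1), let y ∈ ℝ^n be a non-increasing vector with ∑_i y_i = 0, and let γ ∈ (0,1]. Define Φ_i = e^{γ y_i}, Ψ_i = e^{-γ y_i}, Γ = ∑_i (Φ_i + Ψ_i), and ΔΓ̄ = ∑_i [Φ_i·(p_i - 1/n) + Ψ_i·(1/n - p_i)]·γ. Then there exists a constant c = c(δ) > 0 (independent of n, ε, γ, y) such that ΔΓ̄ ≤ -Γ·γεδ/(4n) + c·γ·ε. -/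
open Finset Real

namespace KD

lemma tel (f : ℕ → ℝ) (m M : ℕ) (h : m ≤ M) :
    ∑ l ∈ Ico m M, (f l - f (l+1)) = f m - f M := by
  induction M, h using Nat.le_induction with
  | base => simp
  | succ N hN ih => rw [Finset.sum_Ico_succ_top hN, ih]; ring

lemma abel (g q : ℕ → ℝ) (n : ℕ) :
    ∑ i ∈ Ioc 0 n, g i * q i
      = (∑ l ∈ Ico 1 n, (∑ i ∈ Ioc 0 l, q i) * (g l - g (l+1)))
        + (∑ i ∈ Ioc 0 n, q i) * g n := by
  induction n with
  | zero => simp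
  | succ N ih =>
    rcases Nat.eq_zero_or_pos N with h0 | hN
    · subst h0; simp [mul_comm]
    · rw [Finset.sum_Ioc_succ_top (Nat.zero_le _), Finset.sum_Ico_succ_top hN, ih,
        Finset.sum_Ioc_succ_top (Nat.zero_le _)]
      ring

lemma sum_mul_tel (f : ℕ → ℝ) (m : ℕ) :
    ∑ l ∈ Ico 1 (m+1), (l:ℝ) * (f l - f (l+1))
      = ∑ k ∈ Ioc 0 m, f k - m * f (m+1) := by
  induction m with
  | zero => simp
  | succ N ih =>
    rw [Finset.sum_Ico_succ_top (Nat.succ_le_succ (Nat.zero_le _)),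
      Finset.sum_Ioc_succ_top (Nat.zero_le _), ih]
    push_cast
    ring

lemma sum_mul_tel2 (f : ℕ → ℝ) (m n : ℕ) (h : m ≤ n) :
    ∑ l ∈ Ico m n, ((n:ℝ) - l) * (f l - f (l+1))
      = ((n:ℝ) - m) * f m - ∑ k ∈ Ioc m n, f k := by
  induction n, h using Nat.le_induction with
  | base => simp
  | succ N hN ih =>
    have e1 : ∀ l, ((N:ℝ)+1 - l) * (f l - f (l+1))
        = ((N:ℝ) - l) * (f l - f (l+1)) + (f l - f (l+1)) := by intro l; ring
    have e2 : ∑ k ∈ Ioc m (N+1), f k = ∑ k ∈ Ioc m N, f k + f (N+1) :=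
      Finset.sum_Ioc_succ_top hN f
    rw [Finset.sum_Ico_succ_top hN]
    push_cast
    rw [Finset.sum_congr rfl (fun l _ => e1 l), Finset.sum_add_distrib, ih,
      tel f m N hN, e2]
    push_cast
    ring

lemma phi_mono (X a b : ℝ) (ha : 0 < a) (hab : a ≤ b) (hbX : b ≤ X) :
    b * exp (X/b) ≤ a * exp (X/a) := by
  have hb : 0 < b := lt_of_lt_of_le ha hab
  have h1 : b / a ≤ exp (b/a - 1) := by
    have := Real.add_one_le_exp (b/a - 1)
    linarith
  have h2 : (b/a - 1) + X/b ≤ X/a := by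
    have e : X/a - ((b/a - 1) + X/b) = (b-a)*(X-b)/(a*b) := by field_simp; ring
    have hnn : 0 ≤ (b-a)*(X-b)/(a*b) :=
      div_nonneg (mul_nonneg (by linarith) (by linarith)) (by positivity)
    linarith
  have hba : a * (b/a) = b := by field_simp
  calc b * exp (X/b) = a * (b/a) * exp (X/b) := by rw [hba]
    _ ≤ a * exp (b/a - 1) * exp (X/b) := by gcongr
    _ = a * exp ((b/a - 1) + X/b) := by rw [Real.exp_add]; ring
    _ ≤ a * exp (X/a) := mul_le_mul_of_nonneg_left (Real.exp_le_exp.2 h2) ha.le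

lemma jensen (T : Finset ℕ) (u : ℕ → ℝ) (hT : T.Nonempty) :
    (T.card : ℝ) * exp ((∑ k ∈ T, u k) / T.card) ≤ ∑ k ∈ T, exp (u k) := by
  have hc : (0:ℝ) < T.card := by exact_mod_cast Finset.card_pos.2 hT
  have key := Real.geom_mean_le_arith_mean_weighted T (fun _ => 1 / (T.card:ℝ))
    (fun k => exp (u k)) (fun i _ => by positivity)
    (by rw [Finset.sum_const, nsmul_eq_mul]; field_simp) (fun i _ => (exp_pos _).le)
  have e1 : ∀ i ∈ T, exp (u i) ^ ((1:ℝ) / (T.card:ℝ)) = exp (u i * (1 / T.card)) := by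
    intro i _
    rw [Real.rpow_def_of_pos (exp_pos _), Real.log_exp]
  rw [Finset.prod_congr rfl e1, ← Real.exp_sum, ← Finset.sum_mul] at key
  have e2 : ∀ i ∈ T, 1 / (T.card:ℝ) * exp (u i) = exp (u i) * (1/T.card) := by
    intro i _; ring
  rw [Finset.sum_congr rfl e2, ← Finset.sum_mul] at key
  have : exp ((∑ k ∈ T, u k) / T.card) = exp ((∑ k ∈ T, u k) * (1/T.card)) := by
    rw [mul_one_div]
  rw [this]
  calc (T.card:ℝ) * exp ((∑ k ∈ T, u k) * (1/T.card))
      ≤ (T.card:ℝ) * ((∑ k ∈ T, exp (u k)) * (1/T.card)) := by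
        apply mul_le_mul_of_nonneg_left key hc.le
    _ = ∑ k ∈ T, exp (u k) := by field_simp

lemma down_closed (n : ℕ) (S : Finset ℕ) (hsub : S ⊆ Ioc 0 n)
    (hdc : ∀ k ∈ S, ∀ j, 1 ≤ j → j ≤ k → j ∈ S) : S = Ioc 0 S.card := by
  rcases S.eq_empty_or_nonempty with he | hne
  · simp [he]
  · have hM : S.max' hne ∈ S := S.max'_mem hne
    have hSM : S = Ioc 0 (S.max' hne) := by
      ext k
      constructor
      · intro hk
        exact mem_Ioc.2 ⟨(mem_Ioc.1 (hsub hk)).1, S.le_max' k hk⟩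
      · intro hk
        rcases mem_Ioc.1 hk with ⟨hk1, hk2⟩
        exact hdc _ hM k hk1 hk2
    have hc : S.card = S.max' hne := by
      conv_lhs => rw [hSM]
      rw [Nat.card_Ioc]; omega
    rw [hc]; exact hSM

end KD

namespace KD2

section
variable (δ : ℝ) (n : ℕ) (z f w : ℕ → ℝ)

-- MID case
lemma case_mid (h1 : 0 < δ) (h2 : δ < 1) (hn : 0 < n)
    (hf : ∀ k, f k = exp (z k) - exp (-(z k)))
    (hw : ∀ l, w l = min (l:ℝ) (δ/(1-δ)*((n:ℝ)-l)))
    (s : ℕ) (hslt : s < n)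
    (hd : ∀ l, 1 ≤ l → l < n → 0 ≤ f l - f (l+1))
    (hfpos : ∀ k, 1 ≤ k → k ≤ s → 0 ≤ f k)
    (hfneg : ∀ k, s+1 ≤ k → k ≤ n → f k ≤ 0)
    (hs1 : δ*n/2 ≤ (s:ℝ)) (hs2 : (s:ℝ) ≤ (1+δ)*n/2) :
    δ/4 * ((∑ k ∈ Ioc 0 s, f k) - ∑ k ∈ Ioc s n, f k)
      ≤ (∑ l ∈ Ico 1 n, w l * (f l - f (l+1))) + (δ/(1-δ)+3)*n := by
  have h1δ : 0 < 1 - δ := by linarith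
  have hnR : (0:ℝ) < n := by exact_mod_cast hn
  have hδ4 : (0:ℝ) ≤ δ/4 := by positivity
  have hδn : (0:ℝ) < δ*n := by positivity
  have hs0 : 1 ≤ s := by
    by_contra h
    push_neg at h
    have h0 : s = 0 := by omega
    rw [h0] at hs1
    norm_num at hs1
    linarith only [hs1, hδn]
  have hsR : (1:ℝ) ≤ s := by exact_mod_cast hs0
  have hsRn : (s:ℝ) ≤ n := by exact_mod_cast hslt.le
  -- F+ bound
  have hT1 := KD.sum_mul_tel f s
  have hA : ∑ k ∈ Ioc 0 s, f k ≤ ∑ l ∈ Ico 1 (s+1), (l:ℝ) * (f l - f (l+1)) := by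
    have hfs1 : f (s+1) ≤ 0 := hfneg (s+1) le_rfl hslt
    have hp : 0 ≤ (s:ℝ) * (-(f (s+1))) :=
      mul_nonneg (by positivity) (by linarith only [hfs1])
    linarith only [hT1, hp]
  have hT2 := KD.sum_mul_tel2 f s n hslt.le
  have hB : - ∑ k ∈ Ioc s n, f k ≤ ∑ l ∈ Ico s n, ((n:ℝ) - l) * (f l - f (l+1)) := by
    have hfs : 0 ≤ f s := hfpos s hs0 le_rfl
    have hp : 0 ≤ ((n:ℝ) - s) * f s :=
      mul_nonneg (by linarith only [hsRn]) hfs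
    linarith only [hT2, hp]
  -- split sums
  have e1 : ∑ l ∈ Ico 1 (s+1), (l:ℝ) * (f l - f (l+1))
      = (∑ l ∈ Ico 1 s, (l:ℝ) * (f l - f (l+1))) + (s:ℝ) * (f s - f (s+1)) :=
    Finset.sum_Ico_succ_top hs0 _
  have e2 : ∑ l ∈ Ico s n, ((n:ℝ) - l) * (f l - f (l+1))
      = ((n:ℝ) - s) * (f s - f (s+1)) + ∑ l ∈ Ico (s+1) n, ((n:ℝ) - l) * (f l - f (l+1)) :=
    Finset.sum_eq_sum_Ico_succ_bot hslt _
  have eW : (∑ l ∈ Ico 1 n, w l * (f l - f (l+1)))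
      = (∑ l ∈ Ico 1 s, w l * (f l - f (l+1))) + ∑ l ∈ Ico s n, w l * (f l - f (l+1)) :=
    (Finset.sum_Ico_consecutive _ hs0 hslt.le).symm
  have eW2 : ∑ l ∈ Ico s n, w l * (f l - f (l+1))
      = w s * (f s - f (s+1)) + ∑ l ∈ Ico (s+1) n, w l * (f l - f (l+1)) :=
    Finset.sum_eq_sum_Ico_succ_bot hslt _
  -- per-edge comparisons
  have c1 : δ/4 * ∑ l ∈ Ico 1 s, (l:ℝ) * (f l - f (l+1))
      ≤ ∑ l ∈ Ico 1 s, w l * (f l - f (l+1)) := by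
    rw [Finset.mul_sum]
    apply Finset.sum_le_sum
    intro l hl
    rcases mem_Ico.1 hl with ⟨hl1, hl2⟩
    have hdl : 0 ≤ f l - f (l+1) := hd l hl1 (lt_of_lt_of_le hl2 hslt.le)
    have hlR : (1:ℝ) ≤ l := by exact_mod_cast hl1
    have hlR2 : (l:ℝ) ≤ (1+δ)*n/2 := by
      have : (l:ℝ) ≤ s := by exact_mod_cast hl2.le
      linarith only [this, hs2]
    have hwl : δ/4 * l ≤ w l := by
      rw [hw]
      apply le_min
      · have p1 : 0 ≤ (4-δ)*(l:ℝ) :=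
          mul_nonneg (by linarith only [h2]) (by linarith only [hlR])
        linarith only [p1]
      · rw [show δ/(1-δ)*((n:ℝ)-l) = δ*((n:ℝ)-l)/(1-δ) by ring, le_div_iff₀ h1δ]
        have q1 : δ*(5-δ)*(l:ℝ) ≤ δ*(5-δ)*((1+δ)*n/2) :=
          mul_le_mul_of_nonneg_left hlR2 (mul_nonneg h1.le (by linarith only [h2]))
        have q2 : 0 ≤ δ*(1-δ)*(3-δ)*(n:ℝ) :=
          mul_nonneg (mul_nonneg (mul_nonneg h1.le h1δ.le) (by linarith only [h2])) hnR.le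
        linarith only [q1, q2]
    calc δ/4 * ((l:ℝ) * (f l - f (l+1))) = (δ/4 * l) * (f l - f (l+1)) := by ring
      _ ≤ w l * (f l - f (l+1)) := mul_le_mul_of_nonneg_right hwl hdl
  have c2 : δ/4 * ((s:ℝ) * (f s - f (s+1))) + δ/4 * (((n:ℝ) - s) * (f s - f (s+1)))
      ≤ w s * (f s - f (s+1)) := by
    have hds : 0 ≤ f s - f (s+1) := hd s hs0 hslt
    have hws : δ/4 * n ≤ w s := by
      rw [hw]
      apply le_min
      · linarith only [hs1, hδn]
      · rw [show δ/(1-δ)*((n:ℝ)-s) = δ*((n:ℝ)-s)/(1-δ) by ring, le_div_iff₀ h1δ]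
        have q3 : δ*(s:ℝ) ≤ δ*((1+δ)*n/2) := mul_le_mul_of_nonneg_left hs2 h1.le
        have q4 : 0 ≤ δ*(1-δ)*(n:ℝ) := mul_nonneg (mul_nonneg h1.le h1δ.le) hnR.le
        linarith only [q3, q4]
    calc δ/4 * ((s:ℝ) * (f s - f (s+1))) + δ/4 * (((n:ℝ) - s) * (f s - f (s+1)))
        = (δ/4 * n) * (f s - f (s+1)) := by ring
      _ ≤ w s * (f s - f (s+1)) := mul_le_mul_of_nonneg_right hws hds
  have c3 : δ/4 * ∑ l ∈ Ico (s+1) n, ((n:ℝ) - l) * (f l - f (l+1))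
      ≤ ∑ l ∈ Ico (s+1) n, w l * (f l - f (l+1)) := by
    rw [Finset.mul_sum]
    apply Finset.sum_le_sum
    intro l hl
    rcases mem_Ico.1 hl with ⟨hl1, hl2⟩
    have hdl : 0 ≤ f l - f (l+1) := hd l (by omega) hl2
    have hlR : (s:ℝ) + 1 ≤ l := by exact_mod_cast hl1
    have hlR2 : (l:ℝ) ≤ n := by exact_mod_cast hl2.le
    have hwl : δ/4 * ((n:ℝ) - l) ≤ w l := by
      rw [hw]
      apply le_min
      · have q5 : 0 ≤ δ*(l:ℝ) := mul_nonneg h1.le (by linarith only [hlR, hsR])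
        linarith only [q5, hδn, hs1, hlR]
      · rw [show δ/(1-δ)*((n:ℝ)-l) = δ*((n:ℝ)-l)/(1-δ) by ring, le_div_iff₀ h1δ]
        have q6 : 0 ≤ δ*((n:ℝ)-l)*(3+δ) :=
          mul_nonneg (mul_nonneg h1.le (by linarith only [hlR2])) (by linarith only [h1])
        linarith only [q6]
    calc δ/4 * (((n:ℝ) - l) * (f l - f (l+1))) = (δ/4 * ((n:ℝ)-l)) * (f l - f (l+1)) := by ring
      _ ≤ w l * (f l - f (l+1)) := mul_le_mul_of_nonneg_right hwl hdl
  have hconst : 0 ≤ (δ/(1-δ)+3)*(n:ℝ) := by positivity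
  have hA' := mul_le_mul_of_nonneg_left hA hδ4
  have hB' := mul_le_mul_of_nonneg_left hB hδ4
  rw [e1] at hA'
  rw [e2] at hB'
  rw [eW, eW2]
  have expand1 : δ/4 * ((∑ l ∈ Ico 1 s, (l:ℝ) * (f l - f (l+1))) + (s:ℝ) * (f s - f (s+1)))
      = δ/4 * (∑ l ∈ Ico 1 s, (l:ℝ) * (f l - f (l+1))) + δ/4 * ((s:ℝ) * (f s - f (s+1))) := by
    ring
  have expand2 : δ/4 * (((n:ℝ) - s) * (f s - f (s+1)) + ∑ l ∈ Ico (s+1) n, ((n:ℝ) - l) * (f l - f (l+1)))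
      = δ/4 * (((n:ℝ) - s) * (f s - f (s+1))) + δ/4 * (∑ l ∈ Ico (s+1) n, ((n:ℝ) - l) * (f l - f (l+1))) := by
    ring
  rw [expand1] at hA'
  rw [expand2] at hB'
  have expand0 : δ/4 * ((∑ k ∈ Ioc 0 s, f k) - ∑ k ∈ Ioc s n, f k)
      = δ/4 * (∑ k ∈ Ioc 0 s, f k) + δ/4 * (- ∑ k ∈ Ioc s n, f k) := by ring
  rw [expand0]
  linarith only [c1, c2, c3, hA', hB', hconst]

end

lemma sum_mul_tel' (f : ℕ → ℝ) (j : ℕ) (hj : 1 ≤ j) :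
    ∑ l ∈ Ico 1 j, (l:ℝ) * (f l - f (l+1))
      = ∑ k ∈ Ioc 0 (j-1), f k - ((j:ℝ)-1) * f j := by
  obtain ⟨m, rfl⟩ : ∃ m, j = m + 1 := ⟨j - 1, by omega⟩
  simp only [Nat.add_sub_cancel]
  rw [KD.sum_mul_tel]
  push_cast
  ring

section
variable (δ : ℝ) (n : ℕ) (z f w : ℕ → ℝ)

lemma case_low (h1 : 0 < δ) (h2 : δ < 1) (hn : 0 < n)
    (hf : ∀ k, f k = exp (z k) - exp (-(z k)))
    (hw : ∀ l, w l = min (l:ℝ) (δ/(1-δ)*((n:ℝ)-l)))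
    (hsort : ∀ i j, 1 ≤ i → i ≤ j → j ≤ n → z j ≤ z i)
    (hzero : ∑ i ∈ Ioc 0 n, z i = 0)
    (s : ℕ) (hslt : s < n)
    (hd : ∀ l, 1 ≤ l → l < n → 0 ≤ f l - f (l+1))
    (hfmono : ∀ i j, 1 ≤ i → i ≤ j → j ≤ n → f j ≤ f i)
    (hks : ∀ k, 1 ≤ k → k ≤ s → 0 < z k)
    (hks' : ∀ k, s+1 ≤ k → k ≤ n → z k ≤ 0)
    (hfpos : ∀ k, 1 ≤ k → k ≤ s → 0 ≤ f k)
    (hfneg : ∀ k, s+1 ≤ k → k ≤ n → f k ≤ 0)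
    (hsL : (s:ℝ) < δ*n/2) :
    δ/4 * ((∑ k ∈ Ioc 0 s, f k) - ∑ k ∈ Ioc s n, f k)
      ≤ (∑ l ∈ Ico 1 n, w l * (f l - f (l+1))) + (δ/(1-δ)+3)*n := by
  have h1δ : 0 < 1 - δ := by linarith
  have hnR : (0:ℝ) < n := by exact_mod_cast hn
  have hδ4 : (0:ℝ) ≤ δ/4 := by positivity
  have hδn : (0:ℝ) < δ*n := by positivity
  set j : ℕ := ⌈δ*n/2⌉₊ with hjdef
  have hjR1 : δ*n/2 ≤ (j:ℝ) := Nat.le_ceil _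
  have hjR2 : (j:ℝ) < δ*n/2 + 1 := Nat.ceil_lt_add_one (by positivity)
  have hsj : s < j := by
    have : (s:ℝ) < (j:ℝ) := lt_of_lt_of_le hsL hjR1
    exact_mod_cast this
  have hj1 : 1 ≤ j := by omega
  have hjn : j ≤ n := by
    have h' : (j:ℝ) < (n:ℝ) + 1 := by nlinarith
    have : j < n + 1 := by exact_mod_cast h'
    omega
  have hjm1 : s ≤ j - 1 := by omega
  have hjR0 : (1:ℝ) ≤ (j:ℝ) := by exact_mod_cast hj1
  have hsRn : (s:ℝ) ≤ n := by exact_mod_cast hslt.le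
  have hfj : f j ≤ 0 := hfneg j (by omega) hjn
  have hzj : z j ≤ 0 := hks' j (by omega) hjn
  -- W split
  have eW : (∑ l ∈ Ico 1 n, w l * (f l - f (l+1)))
      = (∑ l ∈ Ico 1 j, w l * (f l - f (l+1))) + ∑ l ∈ Ico j n, w l * (f l - f (l+1)) :=
    (Finset.sum_Ico_consecutive _ hj1 hjn).symm
  -- left piece equals plain weights
  have hWLeq : ∑ l ∈ Ico 1 j, w l * (f l - f (l+1))
      = ∑ l ∈ Ico 1 j, (l:ℝ) * (f l - f (l+1)) := by
    apply Finset.sum_congr rfl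
    intro l hl
    rcases mem_Ico.1 hl with ⟨hl1, hl2⟩
    have hlR : (l:ℝ) + 1 ≤ j := by exact_mod_cast hl2
    have hlδn : (l:ℝ) ≤ δ*n := by linarith only [hlR, hjR2, hδn]
    have : w l = (l:ℝ) := by
      rw [hw]
      apply min_eq_left
      rw [show δ/(1-δ)*((n:ℝ)-l) = δ*((n:ℝ)-l)/(1-δ) by ring, le_div_iff₀ h1δ]
      have q : 0 ≤ δ*(l:ℝ) := mul_nonneg h1.le (by positivity)
      linarith only [hlδn, q]
    rw [this]
  have hT1 := sum_mul_tel' f j hj1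
  -- mids lower bound
  have hmid : ((j:ℝ)-1-s) * f j ≤ ∑ k ∈ Ioc s (j-1), f k := by
    have hcard : ((Ioc s (j-1)).card : ℝ) = (j:ℝ)-1-s := by
      rw [Nat.card_Ioc]
      push_cast [Nat.cast_sub hjm1, Nat.cast_sub hj1]
      ring
    have := Finset.card_nsmul_le_sum (Ioc s (j-1)) f (f j) ?_
    · rw [nsmul_eq_mul, hcard] at this
      exact this
    · intro k hk
      rcases mem_Ioc.1 hk with ⟨hk1, hk2⟩
      exact hfmono k j (by omega) (by omega) hjn
  have hIocsplit : ∑ k ∈ Ioc 0 (j-1), f k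
      = (∑ k ∈ Ioc 0 s, f k) + ∑ k ∈ Ioc s (j-1), f k :=
    (Finset.sum_Ioc_consecutive _ (Nat.zero_le s) hjm1).symm
  have hWL : (∑ k ∈ Ioc 0 s, f k) + (s:ℝ) * (-(f j))
      ≤ ∑ l ∈ Ico 1 j, w l * (f l - f (l+1)) := by
    rw [hWLeq, hT1, hIocsplit]
    linarith only [hmid]
  -- right piece
  have hWR : δ/4 * ∑ l ∈ Ico j n, ((n:ℝ) - l) * (f l - f (l+1))
      ≤ ∑ l ∈ Ico j n, w l * (f l - f (l+1)) := by
    rw [Finset.mul_sum]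
    apply Finset.sum_le_sum
    intro l hl
    rcases mem_Ico.1 hl with ⟨hl1, hl2⟩
    have hdl : 0 ≤ f l - f (l+1) := hd l (by omega) hl2
    have hlR : (j:ℝ) ≤ l := by exact_mod_cast hl1
    have hlR2 : (l:ℝ) ≤ n := by exact_mod_cast hl2.le
    have hwl : δ/4 * ((n:ℝ) - l) ≤ w l := by
      rw [hw]
      apply le_min
      · have q5 : 0 ≤ δ*(l:ℝ) := mul_nonneg h1.le (by linarith only [hlR, hjR0])
        linarith only [q5, hδn, hjR1, hlR]
      · rw [show δ/(1-δ)*((n:ℝ)-l) = δ*((n:ℝ)-l)/(1-δ) by ring, le_div_iff₀ h1δ]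
        have q6 : 0 ≤ δ*((n:ℝ)-l)*(3+δ) :=
          mul_nonneg (mul_nonneg h1.le (by linarith only [hlR2])) (by linarith only [h1])
        linarith only [q6]
    calc δ/4 * (((n:ℝ) - l) * (f l - f (l+1))) = (δ/4 * ((n:ℝ)-l)) * (f l - f (l+1)) := by ring
      _ ≤ w l * (f l - f (l+1)) := mul_le_mul_of_nonneg_right hwl hdl
  have hT2 := KD.sum_mul_tel2 f j n hjn
  -- F- decomposition
  have hFm1 : - ∑ k ∈ Ioc s j, f k ≤ ((j:ℝ)-s) * (-(f j)) := by
    have hcard : ((Ioc s j).card : ℝ) = (j:ℝ)-s := by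
      rw [Nat.card_Ioc]
      push_cast [Nat.cast_sub hsj.le]
      ring
    have := Finset.card_nsmul_le_sum (Ioc s j) f (f j) ?_
    · rw [nsmul_eq_mul, hcard] at this
      linarith only [this]
    · intro k hk
      rcases mem_Ioc.1 hk with ⟨hk1, hk2⟩
      exact hfmono k j (by omega) hk2 hjn
  have hFsplit : ∑ k ∈ Ioc s n, f k
      = (∑ k ∈ Ioc s j, f k) + ∑ k ∈ Ioc j n, f k :=
    (Finset.sum_Ioc_consecutive _ hsj.le hjn).symm
  -- KEY inequality
  have hFp0 : 0 ≤ ∑ k ∈ Ioc 0 s, f k := by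
    apply Finset.sum_nonneg
    intro k hk
    rcases mem_Ioc.1 hk with ⟨hk1, hk2⟩
    exact hfpos k hk1 hk2
  have hfj0 : 0 ≤ -(f j) := by linarith only [hfj]
  have hKEY : δ/4 * (∑ k ∈ Ioc 0 s, f k) + δ/4 * ((n:ℝ) * (-(f j)))
      ≤ (∑ k ∈ Ioc 0 s, f k) + (s:ℝ) * (-(f j)) + 3*n := by
    have hsfj : 0 ≤ (s:ℝ)*(-(f j)) := mul_nonneg (by positivity) hfj0
    have P6 : 0 ≤ (1-δ) * (∑ k ∈ Ioc 0 s, f k) := mul_nonneg h1δ.le hFp0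
    by_cases haj : -(z j) ≤ 1
    · have hfjb : -(f j) ≤ 3 := by
        rw [hf]
        have h3 : exp (-(z j)) ≤ exp 1 := exp_le_exp.2 haj
        have h4 : exp 1 < 2.7182818286 := Real.exp_one_lt_d9
        have h5 : 0 < exp (z j) := exp_pos _
        linarith only [h3, h4, h5]
      have P1 : δ/4 * ((n:ℝ) * (-(f j))) ≤ δ/4 * ((n:ℝ) * 3) := by
        apply mul_le_mul_of_nonneg_left _ hδ4
        exact mul_le_mul_of_nonneg_left hfjb hnR.le
      have P2 : 0 ≤ (4-δ)*(n:ℝ) := mul_nonneg (by linarith only [h2]) hnR.le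
      linarith only [P1, P2, P6, hsfj, hFp0]
    · push_neg at haj
      set X : ℝ := ∑ k ∈ Ioc 0 s, z k with hXdef
      have hXneg : ∑ k ∈ Ioc s n, (-(z k)) = X := by
        have hc := Finset.sum_Ioc_consecutive z (Nat.zero_le s) hslt.le
        rw [Finset.sum_neg_distrib]
        rw [hzero] at hc
        linarith only [hc]
      -- X lower bound
      have hXge : ((n:ℝ) - j + 1) * (-(z j)) ≤ X := by
        rw [← hXneg]
        have hsplit2 : ∑ k ∈ Ioc s n, (-(z k))
            = (∑ k ∈ Ioc s (j-1), (-(z k))) + ∑ k ∈ Ioc (j-1) n, (-(z k)) :=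
          (Finset.sum_Ioc_consecutive _ hjm1 (by omega)).symm
        have hnn1 : 0 ≤ ∑ k ∈ Ioc s (j-1), (-(z k)) := by
          apply Finset.sum_nonneg
          intro k hk
          rcases mem_Ioc.1 hk with ⟨hk1, hk2⟩
          have := hks' k (by omega) (by omega)
          linarith only [this]
        have hcard : ((Ioc (j-1) n).card : ℝ) = (n:ℝ) - j + 1 := by
          rw [Nat.card_Ioc]
          push_cast [Nat.cast_sub (by omega : j - 1 ≤ n), Nat.cast_sub hj1]
          ring
        have hlb := Finset.card_nsmul_le_sum (Ioc (j-1) n) (fun k => -(z k)) (-(z j)) ?_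
        · rw [nsmul_eq_mul, hcard] at hlb
          rw [hsplit2]
          linarith only [hnn1, hlb]
        · intro k hk
          rcases mem_Ioc.1 hk with ⟨hk1, hk2⟩
          have h := hsort j k hj1 (by omega) hk2
          show -(z j) ≤ -(z k)
          linarith only [h]
      have hzj1 : (1:ℝ) ≤ -(z j) := haj.le
      have hnj : (n:ℝ)*(1-δ/2) ≤ (n:ℝ) - j + 1 := by linarith only [hjR2]
      have hXn : (n:ℝ)*(1-δ/2) * (-(z j)) ≤ X := by
        have := mul_le_mul_of_nonneg_right hnj (by linarith only [hzj1] : (0:ℝ) ≤ -(z j))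
        linarith only [this, hXge]
      have hXpos : δ*n/2 ≤ X := by
        have t1 : (n:ℝ)*(1-δ/2)*1 ≤ (n:ℝ)*(1-δ/2)*(-(z j)) :=
          mul_le_mul_of_nonneg_left hzj1 (by nlinarith [hnR, h2])
        have t2 : 0 ≤ (1-δ)*(n:ℝ) := mul_nonneg h1δ.le hnR.le
        linarith only [t1, t2, hXn]
      have hs1 : 1 ≤ s := by
        by_contra h
        push_neg at h
        have h0 : s = 0 := by omega
        rw [h0] at hXdef
        simp at hXdef
        rw [hXdef] at hXpos
        linarith only [hXpos, hδn]
      have hsR1 : (1:ℝ) ≤ s := by exact_mod_cast hs1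
      -- Jensen
      have hcards : ((Ioc 0 s).card : ℝ) = (s:ℝ) := by
        rw [Nat.card_Ioc]; simp
      have hjen := KD.jensen (Ioc 0 s) z ⟨1, mem_Ioc.2 ⟨Nat.zero_lt_one, hs1⟩⟩
      rw [hcards, ← hXdef] at hjen
      have hexplb : ∑ k ∈ Ioc 0 s, (exp (z k) - 1) ≤ ∑ k ∈ Ioc 0 s, f k := by
        apply Finset.sum_le_sum
        intro k hk
        rcases mem_Ioc.1 hk with ⟨hk1, hk2⟩
        rw [hf]
        have : exp (-(z k)) ≤ 1 := exp_le_one_iff.2 (by linarith only [hks k hk1 hk2])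
        linarith only [this]
      have hexpsub : ∑ k ∈ Ioc 0 s, (exp (z k) - 1)
          = (∑ k ∈ Ioc 0 s, exp (z k)) - s := by
        rw [Finset.sum_sub_distrib, Finset.sum_const, nsmul_eq_mul, mul_one, hcards]
      have hFplb : (s:ℝ) * exp (X/(s:ℝ)) - n ≤ ∑ k ∈ Ioc 0 s, f k := by
        have : (s:ℝ) ≤ n := hsRn
        linarith only [hjen, hexplb, hexpsub, this]
      have hphi := KD.phi_mono X (s:ℝ) (δ*n/2) (by linarith only [hsR1]) hsL.le hXpos
      have hexo : exp (-(z j)) ≤ exp (X/(δ*n/2)) := by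
        apply exp_le_exp.2
        rw [le_div_iff₀ (by positivity)]
        have t3 : 0 ≤ (n:ℝ)*(1-δ)*(-(z j)) :=
          mul_nonneg (mul_nonneg hnR.le h1δ.le) (by linarith only [hzj1])
        linarith only [hXn, t3]
      have hfjE : -(f j) ≤ exp (-(z j)) := by
        rw [hf]
        have := exp_pos (z j)
        linarith only [this]
      -- final arithmetic
      have P1 : δ/4 * ((n:ℝ) * (-(f j))) ≤ δ/4 * ((n:ℝ) * exp (-(z j))) := by
        apply mul_le_mul_of_nonneg_left _ hδ4
        exact mul_le_mul_of_nonneg_left hfjE hnR.le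
      have P2 : (δ*n/2) * exp (-(z j)) - n ≤ ∑ k ∈ Ioc 0 s, f k := by
        have step1 : (δ*n/2) * exp (-(z j)) ≤ (δ*n/2) * exp (X/(δ*n/2)) :=
          mul_le_mul_of_nonneg_left hexo (by positivity)
        linarith only [step1, hphi, hFplb]
      have P3 : 0 ≤ δ*(n:ℝ)*exp (-(z j)) := by positivity
      linarith only [P1, P2, P3, P6, hsfj, hFp0]
  -- assemble
  have hB' : δ/4 * (- ∑ k ∈ Ioc s n, f k)
      ≤ δ/4 * (((j:ℝ)-s) * (-(f j))) + δ/4 * (((n:ℝ)-j) * (-(f j)))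
        + δ/4 * ∑ l ∈ Ico j n, ((n:ℝ) - l) * (f l - f (l+1)) := by
    have e3 : - ∑ k ∈ Ioc j n, f k
        = (∑ l ∈ Ico j n, ((n:ℝ) - l) * (f l - f (l+1))) + ((n:ℝ)-j) * (-(f j)) := by
      linarith only [hT2]
    have comb : - ∑ k ∈ Ioc s n, f k
        ≤ ((j:ℝ)-s) * (-(f j)) + (((n:ℝ)-j) * (-(f j))
            + ∑ l ∈ Ico j n, ((n:ℝ) - l) * (f l - f (l+1))) := by
      rw [hFsplit]
      linarith only [hFm1, e3]
    have := mul_le_mul_of_nonneg_left comb hδ4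
    linarith only [this]
  have hA' : δ/4 * (∑ k ∈ Ioc 0 s, f k) + δ/4 * (((j:ℝ)-s) * (-(f j))) + δ/4 * (((n:ℝ)-j) * (-(f j)))
      ≤ δ/4 * (∑ k ∈ Ioc 0 s, f k) + δ/4 * ((n:ℝ) * (-(f j))) := by
    have : ((j:ℝ)-s) * (-(f j)) + ((n:ℝ)-j) * (-(f j)) = ((n:ℝ)-s) * (-(f j)) := by ring
    have hmono2 : ((n:ℝ)-s) * (-(f j)) ≤ (n:ℝ) * (-(f j)) := by
      apply mul_le_mul_of_nonneg_right _ hfj0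
      linarith only [hsRn, hsL, hδn]
    have := mul_le_mul_of_nonneg_left hmono2 hδ4
    linarith only [this]
  have hβn : 0 ≤ δ/(1-δ)*(n:ℝ) := by positivity
  rw [eW]
  have final : δ/4 * ((∑ k ∈ Ioc 0 s, f k) - ∑ k ∈ Ioc s n, f k)
      = δ/4 * (∑ k ∈ Ioc 0 s, f k) + δ/4 * (- ∑ k ∈ Ioc s n, f k) := by ring
  rw [final]
  linarith only [hB', hA', hKEY, hWL, hWR, hβn]

end
section
variable (δ : ℝ) (n : ℕ) (z f w : ℕ → ℝ)

lemma case_high (h1 : 0 < δ) (h2 : δ < 1) (hn : 0 < n)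
    (hf : ∀ k, f k = exp (z k) - exp (-(z k)))
    (hw : ∀ l, w l = min (l:ℝ) (δ/(1-δ)*((n:ℝ)-l)))
    (hsort : ∀ i j, 1 ≤ i → i ≤ j → j ≤ n → z j ≤ z i)
    (hzero : ∑ i ∈ Ioc 0 n, z i = 0)
    (s : ℕ) (hslt : s < n)
    (hd : ∀ l, 1 ≤ l → l < n → 0 ≤ f l - f (l+1))
    (hfmono : ∀ i j, 1 ≤ i → i ≤ j → j ≤ n → f j ≤ f i)
    (hks : ∀ k, 1 ≤ k → k ≤ s → 0 < z k)
    (hks' : ∀ k, s+1 ≤ k → k ≤ n → z k ≤ 0)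
    (hfpos : ∀ k, 1 ≤ k → k ≤ s → 0 ≤ f k)
    (hfneg : ∀ k, s+1 ≤ k → k ≤ n → f k ≤ 0)
    (hsH : (1+δ)*n/2 < (s:ℝ)) :
    δ/4 * ((∑ k ∈ Ioc 0 s, f k) - ∑ k ∈ Ioc s n, f k)
      ≤ (∑ l ∈ Ico 1 n, w l * (f l - f (l+1))) + (δ/(1-δ)+3)*n := by
  have h1δ : 0 < 1 - δ := by linarith
  have hnR : (0:ℝ) < n := by exact_mod_cast hn
  have hδ4 : (0:ℝ) ≤ δ/4 := by positivity
  have hβ0 : (0:ℝ) ≤ δ/(1-δ) := by positivity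
  have hβδ : δ ≤ δ/(1-δ) := by
    rw [le_div_iff₀ h1δ]
    nlinarith [sq_nonneg δ]
  have hsRn : (s:ℝ) ≤ n := by exact_mod_cast hslt.le
  set e : ℕ := ⌈(1-δ)*n/2⌉₊ with hedef
  have heR1 : (1-δ)*n/2 ≤ (e:ℝ) := Nat.le_ceil _
  have heR2 : (e:ℝ) < (1-δ)*n/2 + 1 := Nat.ceil_lt_add_one (by positivity)
  have he1 : 1 ≤ e := by
    by_contra h
    push_neg at h
    have h0 : e = 0 := by omega
    rw [h0] at heR1
    norm_num at heR1
    nlinarith [heR1, h1δ, hnR]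
  have hen : e ≤ n := by
    have h' : (e:ℝ) < (n:ℝ) + 1 := by nlinarith [heR2, hnR, h1]
    have : e < n + 1 := by exact_mod_cast h'
    omega
  set m : ℕ := n - e + 1 with hmdef
  have hmcast : (m:ℝ) = (n:ℝ) - e + 1 := by
    rw [hmdef]
    push_cast [Nat.cast_sub hen]
    ring
  have hm1 : 1 ≤ m := by omega
  have hmn : m ≤ n := by omega
  have hmgt : (1+δ)*n/2 < (m:ℝ) := by
    rw [hmcast]
    linarith only [heR2]
  have hmle : (m:ℝ) ≤ (1+δ)*n/2 + 1 := by
    rw [hmcast]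
    linarith only [heR1]
  have hms : m ≤ s := by
    have : (m:ℝ) < (s:ℝ) + 1 := by linarith only [hmle, hsH]
    have : m < s + 1 := by exact_mod_cast this
    omega
  have hzm : 0 < z m := hks m hm1 hms
  have hfm : 0 ≤ f m := hfpos m hm1 hms
  -- W split
  have eW : (∑ l ∈ Ico 1 n, w l * (f l - f (l+1)))
      = (∑ l ∈ Ico 1 m, w l * (f l - f (l+1))) + ∑ l ∈ Ico m n, w l * (f l - f (l+1)) :=
    (Finset.sum_Ico_consecutive _ hm1 hmn).symm
  -- left per-edge
  have hWL : δ/4 * ∑ l ∈ Ico 1 m, (l:ℝ) * (f l - f (l+1))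
      ≤ ∑ l ∈ Ico 1 m, w l * (f l - f (l+1)) := by
    rw [Finset.mul_sum]
    apply Finset.sum_le_sum
    intro l hl
    rcases mem_Ico.1 hl with ⟨hl1, hl2⟩
    have hdl : 0 ≤ f l - f (l+1) := hd l hl1 (by omega)
    have hlR : (1:ℝ) ≤ l := by exact_mod_cast hl1
    have hlm : (l:ℝ) + 1 ≤ m := by exact_mod_cast hl2
    have hlR2 : (l:ℝ) ≤ (1+δ)*n/2 := by linarith only [hlm, hmle]
    have hwl : δ/4 * l ≤ w l := by
      rw [hw]
      apply le_min
      · have p1 : 0 ≤ (4-δ)*(l:ℝ) :=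
          mul_nonneg (by linarith only [h2]) (by linarith only [hlR])
        linarith only [p1]
      · rw [show δ/(1-δ)*((n:ℝ)-l) = δ*((n:ℝ)-l)/(1-δ) by ring, le_div_iff₀ h1δ]
        have q1 : δ*(5-δ)*(l:ℝ) ≤ δ*(5-δ)*((1+δ)*n/2) :=
          mul_le_mul_of_nonneg_left hlR2 (mul_nonneg h1.le (by linarith only [h2]))
        have q2 : 0 ≤ δ*(1-δ)*(3-δ)*(n:ℝ) :=
          mul_nonneg (mul_nonneg (mul_nonneg h1.le h1δ.le) (by linarith only [h2])) hnR.le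
        linarith only [q1, q2]
    calc δ/4 * ((l:ℝ) * (f l - f (l+1))) = (δ/4 * l) * (f l - f (l+1)) := by ring
      _ ≤ w l * (f l - f (l+1)) := mul_le_mul_of_nonneg_right hwl hdl
  have hT1 := sum_mul_tel' f m hm1
  -- F+ upper bound
  have hmm1 : m - 1 ≤ s := by omega
  have hFsplit : ∑ k ∈ Ioc 0 s, f k
      = (∑ k ∈ Ioc 0 (m-1), f k) + ∑ k ∈ Ioc (m-1) s, f k :=
    (Finset.sum_Ioc_consecutive _ (Nat.zero_le _) hmm1).symm
  have hmidU : ∑ k ∈ Ioc (m-1) s, f k ≤ ((s:ℝ) - m + 1) * f m := by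
    have hcard : ((Ioc (m-1) s).card : ℝ) = (s:ℝ) - m + 1 := by
      rw [Nat.card_Ioc]
      push_cast [Nat.cast_sub hmm1, Nat.cast_sub hm1]
      ring
    have := Finset.sum_le_card_nsmul (Ioc (m-1) s) f (f m) ?_
    · rw [nsmul_eq_mul, hcard] at this
      exact this
    · intro k hk
      rcases mem_Ioc.1 hk with ⟨hk1, hk2⟩
      exact hfmono m k hm1 (by omega) (by omega)
  -- right piece: weights are exactly beta*(n-l)
  have hWReq : ∑ l ∈ Ico m n, w l * (f l - f (l+1))
      = δ/(1-δ) * ∑ l ∈ Ico m n, ((n:ℝ)-l) * (f l - f (l+1)) := by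
    rw [Finset.mul_sum]
    apply Finset.sum_congr rfl
    intro l hl
    rcases mem_Ico.1 hl with ⟨hl1, hl2⟩
    have hlm : (m:ℝ) ≤ l := by exact_mod_cast hl1
    have hlR2 : (l:ℝ) ≤ n := by exact_mod_cast hl2.le
    have : w l = δ/(1-δ)*((n:ℝ)-l) := by
      rw [hw]
      apply min_eq_right
      rw [show δ/(1-δ)*((n:ℝ)-l) = δ*((n:ℝ)-l)/(1-δ) by ring, div_le_iff₀ h1δ]
      have t : 0 ≤ (1-δ)*(n:ℝ) := mul_nonneg h1δ.le hnR.le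
      linarith only [hmgt, hlm, t]
    rw [this]
    ring
  have hT2 := KD.sum_mul_tel2 f m n hmn
  have hsufsplit : ∑ k ∈ Ioc m n, f k
      = (∑ k ∈ Ioc m s, f k) + ∑ k ∈ Ioc s n, f k :=
    (Finset.sum_Ioc_consecutive _ hms (by omega)).symm
  have hsufU : ∑ k ∈ Ioc m s, f k ≤ ((s:ℝ) - m) * f m := by
    have hcard : ((Ioc m s).card : ℝ) = (s:ℝ) - m := by
      rw [Nat.card_Ioc]
      push_cast [Nat.cast_sub hms]
      ring
    have := Finset.sum_le_card_nsmul (Ioc m s) f (f m) ?_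
    · rw [nsmul_eq_mul, hcard] at this
      exact this
    · intro k hk
      rcases mem_Ioc.1 hk with ⟨hk1, hk2⟩
      exact hfmono m k hm1 (by omega) (by omega)
  have hFN0 : 0 ≤ - ∑ k ∈ Ioc s n, f k := by
    have : ∑ k ∈ Ioc s n, f k ≤ 0 := by
      apply Finset.sum_nonpos
      intro k hk
      rcases mem_Ioc.1 hk with ⟨hk1, hk2⟩
      exact hfneg k (by omega) hk2
    linarith only [this]
  have hWR : δ/(1-δ) * (((n:ℝ)-s) * f m + (- ∑ k ∈ Ioc s n, f k))
      ≤ ∑ l ∈ Ico m n, w l * (f l - f (l+1)) := by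
    rw [hWReq]
    apply mul_le_mul_of_nonneg_left _ hβ0
    rw [hT2, hsufsplit]
    linarith only [hsufU]
  -- KEY
  have hKEY : δ/4 * ((n:ℝ) * f m) + δ/4 * (- ∑ k ∈ Ioc s n, f k)
      ≤ δ/(1-δ) * (((n:ℝ)-s) * f m + (- ∑ k ∈ Ioc s n, f k)) + (δ/(1-δ)+1)*n := by
    have hβfm : 0 ≤ δ/(1-δ) * (((n:ℝ)-s)*f m) :=
      mul_nonneg hβ0 (mul_nonneg (by linarith only [hsRn]) hfm)
    have hβFN : (δ/4) * (- ∑ k ∈ Ioc s n, f k) ≤ δ/(1-δ) * (- ∑ k ∈ Ioc s n, f k) :=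
      mul_le_mul_of_nonneg_right (by linarith only [hβδ, h1]) hFN0
    -- reduces to: δ/4*n*f m ≤ (β-δ/4)*FN + (β+1)*n  (we prove stronger forms below)
    by_cases hv : z m ≤ 1
    · have hfmb : f m ≤ 3 := by
        rw [hf]
        have h3 : exp (z m) ≤ exp 1 := exp_le_exp.2 hv
        have h4 : exp 1 < 2.7182818286 := Real.exp_one_lt_d9
        have h5 : 0 < exp (-(z m)) := exp_pos _
        linarith only [h3, h4, h5]
      have P1 : δ/4 * ((n:ℝ) * f m) ≤ δ/4 * ((n:ℝ) * 3) := by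
        apply mul_le_mul_of_nonneg_left _ hδ4
        exact mul_le_mul_of_nonneg_left hfmb hnR.le
      have P2 : 0 ≤ (1-δ)*(n:ℝ) := mul_nonneg h1δ.le hnR.le
      have P3 : 0 ≤ δ/(1-δ)*(n:ℝ) := mul_nonneg hβ0 hnR.le
      linarith only [P1, P2, P3, hβfm, hβFN, hnR.le]
    · push_neg at hv
      set X : ℝ := ∑ k ∈ Ioc 0 s, z k with hXdef
      have hXneg : ∑ k ∈ Ioc s n, (-(z k)) = X := by
        have hc := Finset.sum_Ioc_consecutive z (Nat.zero_le s) hslt.le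
        rw [Finset.sum_neg_distrib]
        rw [hzero] at hc
        linarith only [hc]
      have hXge : (m:ℝ) * z m ≤ X := by
        have hsplit2 : X = (∑ k ∈ Ioc 0 m, z k) + ∑ k ∈ Ioc m s, z k :=
          (Finset.sum_Ioc_consecutive _ (Nat.zero_le m) hms).symm
        have hnn1 : 0 ≤ ∑ k ∈ Ioc m s, z k := by
          apply Finset.sum_nonneg
          intro k hk
          rcases mem_Ioc.1 hk with ⟨hk1, hk2⟩
          exact (hks k (by omega) hk2).le
        have hcard : ((Ioc 0 m).card : ℝ) = (m:ℝ) := by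
          rw [Nat.card_Ioc]; simp
        have hlb := Finset.card_nsmul_le_sum (Ioc 0 m) z (z m) ?_
        · rw [nsmul_eq_mul, hcard] at hlb
          rw [hsplit2]
          linarith only [hnn1, hlb]
        · intro k hk
          rcases mem_Ioc.1 hk with ⟨hk1, hk2⟩
          exact hsort k m hk1 hk2 hmn
      have hXge2 : (1+δ)*n/2 * z m ≤ X := by
        have := mul_le_mul_of_nonneg_right hmgt.le hzm.le
        linarith only [this, hXge]
      -- Jensen on the negative side
      have hcardns : ((Ioc s n).card : ℝ) = (n:ℝ) - s := by
        rw [Nat.card_Ioc]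
        push_cast [Nat.cast_sub hslt.le]
        ring
      have hne : (Ioc s n).Nonempty := ⟨n, mem_Ioc.2 ⟨hslt, le_rfl⟩⟩
      have hjen := KD.jensen (Ioc s n) (fun k => -(z k)) hne
      rw [hcardns] at hjen
      have hsumneg : (∑ k ∈ Ioc s n, -(z k)) / ((n:ℝ)-s) = X / ((n:ℝ)-s) := by
        rw [hXneg]
      rw [hsumneg] at hjen
      have hFNlb1 : ∑ k ∈ Ioc s n, (exp (-(z k)) - 1) ≤ - ∑ k ∈ Ioc s n, f k := by
        rw [← Finset.sum_neg_distrib]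
        apply Finset.sum_le_sum
        intro k hk
        rcases mem_Ioc.1 hk with ⟨hk1, hk2⟩
        rw [hf]
        have : exp (z k) ≤ 1 := exp_le_one_iff.2 (hks' k (by omega) hk2)
        linarith only [this]
      have hFNlb2 : ∑ k ∈ Ioc s n, (exp (-(z k)) - 1)
          = (∑ k ∈ Ioc s n, exp (-(z k))) - ((n:ℝ)-s) := by
        rw [Finset.sum_sub_distrib, Finset.sum_const, nsmul_eq_mul, mul_one, hcardns]
      have hFNlb : ((n:ℝ)-s) * exp (X/((n:ℝ)-s)) - n ≤ - ∑ k ∈ Ioc s n, f k := by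
        have hns : (n:ℝ) - s ≤ n := by linarith only [hsH, hnR, h1]
        linarith only [hjen, hFNlb1, hFNlb2, hns]
      have hnspos : (0:ℝ) < (n:ℝ) - s := by
        have : (s:ℝ) < n := by exact_mod_cast hslt
        linarith only [this]
      have hnsb : (n:ℝ) - s ≤ (1-δ)*n/2 := by linarith only [hsH]
      have hbX : (1-δ)*n/2 ≤ X := by
        have t1 : (1+δ)*n/2 * 1 ≤ (1+δ)*n/2 * z m :=
          mul_le_mul_of_nonneg_left hv.le (by positivity)
        have t2 : 0 ≤ δ*(n:ℝ) := by positivity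
        linarith only [t1, t2, hXge2, hnR]
      have hphi := KD.phi_mono X ((n:ℝ)-s) ((1-δ)*n/2) hnspos hnsb hbX
      have hexo : exp (z m) ≤ exp (X/((1-δ)*n/2)) := by
        apply exp_le_exp.2
        rw [le_div_iff₀ (by positivity)]
        have t3 : z m * ((1-δ)*n/2) ≤ z m * ((1+δ)*n/2) := by
          apply mul_le_mul_of_nonneg_left _ hzm.le
          have : 0 ≤ δ*(n:ℝ) := by positivity
          linarith only [this]
        have t4 : z m * ((1+δ)*n/2) ≤ X := by
          have : (1+δ)*n/2 * z m = z m * ((1+δ)*n/2) := by ring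
          linarith only [hXge2, this.le, this.ge]
        linarith only [t3, t4]
      have hFNfinal : ((1-δ)*n/2) * exp (z m) - n ≤ - ∑ k ∈ Ioc s n, f k := by
        have step : ((1-δ)*n/2) * exp (z m) ≤ ((1-δ)*n/2) * exp (X/((1-δ)*n/2)) :=
          mul_le_mul_of_nonneg_left hexo (by positivity)
        linarith only [step, hphi, hFNlb]
      have hfmE : f m ≤ exp (z m) := by
        rw [hf]
        have := exp_pos (-(z m))
        linarith only [this]
      have key1 : (δ/(1-δ) - δ/4) * (((1-δ)*n/2) * exp (z m) - n)
          ≤ (δ/(1-δ) - δ/4) * (- ∑ k ∈ Ioc s n, f k) :=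
        mul_le_mul_of_nonneg_left hFNfinal (by linarith only [hβδ, h1])
      have expand : (δ/(1-δ) - δ/4) * (((1-δ)*n/2) * exp (z m) - n)
          = δ*n*exp (z m)/2 - δ*(1-δ)*n*exp (z m)/8 - (δ/(1-δ))*n + δ*n/4 := by
        field_simp
        ring
      have t5 : δ/4 * ((n:ℝ) * f m) ≤ δ/4 * ((n:ℝ) * exp (z m)) := by
        apply mul_le_mul_of_nonneg_left _ hδ4
        exact mul_le_mul_of_nonneg_left hfmE hnR.le
      have t4 : 0 ≤ δ*(1+δ)*(n:ℝ)*exp (z m) := by positivity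
      have t6 : 0 ≤ (n:ℝ) := hnR.le
      have t7 : 0 ≤ δ*(n:ℝ) := by positivity
      linarith only [key1, expand, t5, t4, t6, t7, hβfm, hβFN, hFN0]
  -- assemble
  have hFpU : δ/4 * (∑ k ∈ Ioc 0 s, f k)
      ≤ (∑ l ∈ Ico 1 m, w l * (f l - f (l+1))) + δ/4 * ((n:ℝ) * f m) := by
    have step1 : δ/4 * (∑ k ∈ Ioc 0 s, f k)
        ≤ δ/4 * ((∑ k ∈ Ioc 0 (m-1), f k) + ((s:ℝ) - m + 1) * f m) := by
      apply mul_le_mul_of_nonneg_left _ hδ4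
      rw [hFsplit]
      linarith only [hmidU]
    have step2 : δ/4 * ((∑ k ∈ Ioc 0 (m-1), f k) + ((s:ℝ) - m + 1) * f m)
        = δ/4 * (∑ l ∈ Ico 1 m, (l:ℝ) * (f l - f (l+1))) + δ/4 * ((s:ℝ) * f m) := by
      rw [hT1]
      ring
    have step3 : δ/4 * ((s:ℝ) * f m) ≤ δ/4 * ((n:ℝ) * f m) := by
      apply mul_le_mul_of_nonneg_left _ hδ4
      exact mul_le_mul_of_nonneg_right hsRn hfm
    linarith only [step1, step2, step3, hWL]
  rw [eW]
  have final : δ/4 * ((∑ k ∈ Ioc 0 s, f k) - ∑ k ∈ Ioc s n, f k)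
      = δ/4 * (∑ k ∈ Ioc 0 s, f k) + δ/4 * (- ∑ k ∈ Ioc s n, f k) := by ring
  rw [final]
  have hβn2 : 0 ≤ 2*(n:ℝ) := by positivity
  linarith only [hFpU, hKEY, hWR, hβn2]

end
section
variable (δ : ℝ) (n : ℕ) (z f w : ℕ → ℝ)

lemma core (h1 : 0 < δ) (h2 : δ < 1) (hn : 0 < n)
    (hf : ∀ k, f k = exp (z k) - exp (-(z k)))
    (hw : ∀ l, w l = min (l:ℝ) (δ/(1-δ)*((n:ℝ)-l)))
    (hsort : ∀ i j, 1 ≤ i → i ≤ j → j ≤ n → z j ≤ z i)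
    (hzero : ∑ i ∈ Ioc 0 n, z i = 0) :
    δ/4 * (∑ i ∈ Ioc 0 n, (exp (z i) + exp (-(z i))))
      ≤ (∑ l ∈ Ico 1 n, w l * (f l - f (l+1))) + (δ/(1-δ) + 5) * n := by
  classical
  have h1δ : 0 < 1 - δ := by linarith
  have hnR : (0:ℝ) < n := by exact_mod_cast hn
  have hδ4 : (0:ℝ) ≤ δ/4 := by positivity
  have hfmono : ∀ i j, 1 ≤ i → i ≤ j → j ≤ n → f j ≤ f i := by
    intro i j hi hij hjn
    rw [hf, hf]
    have hz := hsort i j hi hij hjn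
    have e1 : exp (z j) ≤ exp (z i) := exp_le_exp.2 hz
    have e2 : exp (-(z i)) ≤ exp (-(z j)) := exp_le_exp.2 (by linarith only [hz])
    linarith only [e1, e2]
  have hd : ∀ l, 1 ≤ l → l < n → 0 ≤ f l - f (l+1) := by
    intro l hl hln
    have := hfmono l (l+1) hl (Nat.le_succ l) hln
    linarith only [this]
  -- positive set
  set S : Finset ℕ := (Ioc 0 n).filter (fun k => 0 < z k) with hSdef
  have hsub : S ⊆ Ioc 0 n := Finset.filter_subset _ _
  have hdc : ∀ k ∈ S, ∀ j, 1 ≤ j → j ≤ k → j ∈ S := by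
    intro k hk j hj1 hjk
    rcases Finset.mem_filter.1 hk with ⟨hkI, hkz⟩
    rcases mem_Ioc.1 hkI with ⟨hk0, hkn⟩
    apply Finset.mem_filter.2
    refine ⟨mem_Ioc.2 ⟨by omega, by omega⟩, ?_⟩
    have := hsort j k hj1 hjk hkn
    show 0 < z j
    linarith only [this, hkz]
  have hSIoc := KD.down_closed n S hsub hdc
  set s : ℕ := S.card with hsdef
  have hsn : s ≤ n := by
    have := Finset.card_le_card hsub
    rwa [Nat.card_Ioc, Nat.sub_zero] at this
  have hks : ∀ k, 1 ≤ k → k ≤ s → 0 < z k := by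
    intro k hk1 hk2
    have hkS : k ∈ S := by
      rw [hSIoc]
      exact mem_Ioc.2 ⟨by omega, hk2⟩
    exact (Finset.mem_filter.1 hkS).2
  have hks' : ∀ k, s+1 ≤ k → k ≤ n → z k ≤ 0 := by
    intro k hk1 hk2
    by_contra hcon
    push_neg at hcon
    have hkS : k ∈ S := Finset.mem_filter.2 ⟨mem_Ioc.2 ⟨by omega, hk2⟩, hcon⟩
    rw [hSIoc] at hkS
    have := (mem_Ioc.1 hkS).2
    omega
  have hslt : s < n := by
    rcases eq_or_lt_of_le hsn with he | hlt
    · exfalso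
      have hpos : 0 < ∑ i ∈ Ioc 0 n, z i := by
        apply Finset.sum_pos
        · intro k hk
          rcases mem_Ioc.1 hk with ⟨hk0, hkn⟩
          exact hks k hk0 (by omega)
        · exact ⟨n, mem_Ioc.2 ⟨hn, le_rfl⟩⟩
      rw [hzero] at hpos
      exact lt_irrefl 0 hpos
    · exact hlt
  have hfpos : ∀ k, 1 ≤ k → k ≤ s → 0 ≤ f k := by
    intro k hk1 hk2
    rw [hf]
    have hzk := hks k hk1 hk2
    have := exp_le_exp.2 (show -(z k) ≤ z k by linarith only [hzk])
    linarith only [this]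
  have hfneg : ∀ k, s+1 ≤ k → k ≤ n → f k ≤ 0 := by
    intro k hk1 hk2
    rw [hf]
    have hzk := hks' k hk1 hk2
    have := exp_le_exp.2 (show z k ≤ -(z k) by linarith only [hzk])
    linarith only [this]
  -- Gamma bound
  have hΓsplit : ∑ i ∈ Ioc 0 n, (exp (z i) + exp (-(z i)))
      = (∑ i ∈ Ioc 0 s, (exp (z i) + exp (-(z i))))
        + ∑ i ∈ Ioc s n, (exp (z i) + exp (-(z i))) :=
    (Finset.sum_Ioc_consecutive _ (Nat.zero_le s) hslt.le).symm
  have hcards : ((Ioc 0 s).card : ℝ) = (s:ℝ) := by rw [Nat.card_Ioc]; simp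
  have hcardns : ((Ioc s n).card : ℝ) = (n:ℝ) - s := by
    rw [Nat.card_Ioc]
    push_cast [Nat.cast_sub hslt.le]
    ring
  have hG1 : ∑ i ∈ Ioc 0 s, (exp (z i) + exp (-(z i)))
      ≤ 2*(s:ℝ) + ∑ i ∈ Ioc 0 s, f i := by
    have hstep : ∑ i ∈ Ioc 0 s, (exp (z i) + exp (-(z i)))
        ≤ ∑ i ∈ Ioc 0 s, (2 + f i) := by
      apply Finset.sum_le_sum
      intro i hi
      rcases mem_Ioc.1 hi with ⟨hi0, his⟩
      rw [hf]
      have : exp (-(z i)) ≤ 1 := exp_le_one_iff.2 (by linarith only [hks i hi0 his])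
      linarith only [this]
    have : ∑ i ∈ Ioc 0 s, ((2:ℝ) + f i) = 2*(s:ℝ) + ∑ i ∈ Ioc 0 s, f i := by
      rw [Finset.sum_add_distrib, Finset.sum_const, nsmul_eq_mul, hcards]
      ring
    linarith only [hstep, this]
  have hG2 : ∑ i ∈ Ioc s n, (exp (z i) + exp (-(z i)))
      ≤ 2*((n:ℝ)-s) + (- ∑ i ∈ Ioc s n, f i) := by
    have hstep : ∑ i ∈ Ioc s n, (exp (z i) + exp (-(z i)))
        ≤ ∑ i ∈ Ioc s n, (2 - f i) := by
      apply Finset.sum_le_sum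
      intro i hi
      rcases mem_Ioc.1 hi with ⟨hi0, hin⟩
      rw [hf]
      have : exp (z i) ≤ 1 := exp_le_one_iff.2 (hks' i (by omega) hin)
      linarith only [this]
    have : ∑ i ∈ Ioc s n, ((2:ℝ) - f i) = 2*((n:ℝ)-s) + (- ∑ i ∈ Ioc s n, f i) := by
      rw [Finset.sum_sub_distrib, Finset.sum_const, nsmul_eq_mul, hcardns]
      ring
    linarith only [hstep, this]
  -- main case analysis
  have main : δ/4 * ((∑ k ∈ Ioc 0 s, f k) - ∑ k ∈ Ioc s n, f k)
      ≤ (∑ l ∈ Ico 1 n, w l * (f l - f (l+1))) + (δ/(1-δ)+3)*n := by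
    rcases lt_or_ge ((s:ℝ)) (δ*n/2) with hsL | hs1
    · exact case_low δ n z f w h1 h2 hn hf hw hsort hzero s hslt hd hfmono hks hks' hfpos hfneg hsL
    · rcases le_or_gt ((s:ℝ)) ((1+δ)*n/2) with hs2 | hsH
      · exact case_mid δ n z f w h1 h2 hn hf hw s hslt hd hfpos hfneg hs1 hs2
      · exact case_high δ n z f w h1 h2 hn hf hw hsort hzero s hslt hd hfmono hks hks' hfpos hfneg hsH
  -- assemble
  have hΓ : ∑ i ∈ Ioc 0 n, (exp (z i) + exp (-(z i)))
      ≤ 2*(n:ℝ) + ((∑ k ∈ Ioc 0 s, f k) - ∑ k ∈ Ioc s n, f k) := by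
    rw [hΓsplit]
    linarith only [hG1, hG2]
  have hmul := mul_le_mul_of_nonneg_left hΓ hδ4
  have hβn : 0 ≤ δ/(1-δ)*(n:ℝ) := by positivity
  have hδn2 : δ/4 * (2*(n:ℝ)) ≤ 2*n := by nlinarith [hnR, h1, h2]
  nlinarith [hmul, main, hδn2, hβn, hnR]

end
end KD2


/-- Key drift lemma: for any probability vector satisfying condition C1
and any sorted zero-sum load vector, the hyperbolic cosine potential drops. -/
theorem key_drift_lemma (δ : ℝ) (hδ : δ ∈ Set.Ioo (0:ℝ) 1) :
    ∃ c : ℝ, 0 < c ∧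
    ∀ (n : ℕ) (p y : ℕ → ℝ) (ε γ : ℝ),
      0 < n → ε ∈ Set.Ioo (0:ℝ) 1 → γ ∈ Set.Ioc (0:ℝ) 1 →
      (∀ i ∈ Finset.Icc 1 n, 0 ≤ p i) →
      (∑ i ∈ Finset.Icc 1 n, p i = 1) →
      (∀ i j, 1 ≤ i → i ≤ j → j ≤ n → y j ≤ y i) →
      (∑ i ∈ Finset.Icc 1 n, y i = 0) →
      (∀ k : ℕ, 1 ≤ k → (k : ℝ) ≤ n * δ →
        ∑ i ∈ Finset.Icc 1 k, p i ≤ (1 - ε) * k / n) →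
      (∀ k : ℕ, n * δ + 1 ≤ (k : ℝ) → k ≤ n →
        ∑ i ∈ Finset.Icc k n, p i ≥ (1 + ε * δ / (1 - δ)) * ((n : ℝ) - k + 1) / n) →
      ∑ i ∈ Finset.Icc 1 n,
          (Real.exp (γ * y i) * (p i - 1 / n) + Real.exp (-(γ * y i)) * (1 / n - p i)) * γ
        ≤ -(∑ i ∈ Finset.Icc 1 n, (Real.exp (γ * y i) + Real.exp (-(γ * y i))))
            * γ * ε * δ / (4 * n) + c * γ * ε := by
  obtain ⟨hδ1, hδ2⟩ := hδ
  have h1δ : 0 < 1 - δ := by linarith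
  refine ⟨δ/(1-δ) + 5, by positivity, ?_⟩
  intro n p y ε γ hn hε hγ hp hpsum hysort hyzero hpre hsuf
  obtain ⟨hε1, hε2⟩ := hε
  obtain ⟨hγ1, hγ2⟩ := hγ
  have hnR : (0:ℝ) < n := by exact_mod_cast hn
  have hIoc : Finset.Icc 1 n = Finset.Ioc 0 n := by
    ext x; simp [Finset.mem_Icc, Finset.mem_Ioc]; omega
  set z : ℕ → ℝ := fun i => γ * y i with hzdef
  set f : ℕ → ℝ := fun i => exp (z i) - exp (-(z i)) with hfdef
  set w : ℕ → ℝ := fun l => min (l:ℝ) (δ/(1-δ)*((n:ℝ)-l)) with hwdef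
  set q : ℕ → ℝ := fun i => p i - 1/n with hqdef
  have hzsort : ∀ i j, 1 ≤ i → i ≤ j → j ≤ n → z j ≤ z i := by
    intro i j hi hij hjn
    have := hysort i j hi hij hjn
    simp only [hzdef]
    nlinarith [hγ1]
  have hzzero : ∑ i ∈ Finset.Ioc 0 n, z i = 0 := by
    rw [← hIoc]
    simp only [hzdef]
    rw [← Finset.mul_sum, hyzero, mul_zero]
  have hcore := KD2.core δ n z f w hδ1 hδ2 hn (fun k => rfl) (fun l => rfl) hzsort hzzero
  -- pointwise rewrite of the LHS
  have hlhs : ∑ i ∈ Finset.Icc 1 n,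
      (Real.exp (γ * y i) * (p i - 1 / n) + Real.exp (-(γ * y i)) * (1 / n - p i)) * γ
      = γ * ∑ i ∈ Finset.Ioc 0 n, f i * q i := by
    rw [← hIoc, Finset.mul_sum]
    apply Finset.sum_congr rfl
    intro i hi
    simp only [hfdef, hqdef, hzdef]
    ring
  rw [hlhs]
  -- Abel
  have habel := KD.abel f q n
  have hPn : ∑ i ∈ Finset.Ioc 0 n, q i = 0 := by
    simp only [hqdef]
    rw [Finset.sum_sub_distrib, Finset.sum_const, Nat.card_Ioc, Nat.sub_zero, nsmul_eq_mul]
    rw [← hIoc] at *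
    rw [hpsum]
    field_simp
    norm_num
  rw [hPn, zero_mul, add_zero] at habel
  -- monotonicity of f
  have hd : ∀ l, 1 ≤ l → l < n → 0 ≤ f l - f (l+1) := by
    intro l hl hln
    have hz := hzsort l (l+1) hl (Nat.le_succ l) hln
    simp only [hfdef]
    have e1 : exp (z (l+1)) ≤ exp (z l) := exp_le_exp.2 hz
    have e2 : exp (-(z l)) ≤ exp (-(z (l+1))) := exp_le_exp.2 (by linarith only [hz])
    linarith only [e1, e2]
  -- prefix sum bounds
  have hεn : (0:ℝ) ≤ ε/n := by positivity
  have hP : ∀ l ∈ Finset.Ico 1 n, (∑ i ∈ Finset.Ioc 0 l, q i) ≤ -(ε/n) * w l := by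
    intro l hl
    rcases Finset.mem_Ico.1 hl with ⟨hl1, hl2⟩
    have hIocl : Finset.Icc 1 l = Finset.Ioc 0 l := by
      ext x; simp [Finset.mem_Icc, Finset.mem_Ioc]; omega
    have hcardl : ((Finset.Ioc 0 l).card : ℝ) = (l:ℝ) := by
      rw [Nat.card_Ioc]; simp
    have hqsum : ∑ i ∈ Finset.Ioc 0 l, q i = (∑ i ∈ Finset.Ioc 0 l, p i) - l/n := by
      simp only [hqdef]
      rw [Finset.sum_sub_distrib, Finset.sum_const, nsmul_eq_mul, hcardl]
      ring
    rcases le_or_gt ((l:ℝ)) ((n:ℝ)*δ) with hcase | hcase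
    · have hpre' := hpre l hl1 hcase
      rw [hIocl] at hpre'
      have hwle : w l ≤ (l:ℝ) := min_le_left _ _
      have hb : (ε/n) * w l ≤ (ε/n) * l := mul_le_mul_of_nonneg_left hwle hεn
      have : (∑ i ∈ Finset.Ioc 0 l, p i) - l/n ≤ -(ε * l/n) := by
        have expand : (1-ε)*(l:ℝ)/n - (l:ℝ)/n = -(ε*l/n) := by ring
        linarith only [hpre', expand.le, expand.ge]
      rw [hqsum]
      have heq : ε * (l:ℝ)/n = (ε/n) * l := by ring
      linarith only [this, hb, heq.le, heq.ge]
    · have hsuf' := hsuf (l+1) (by push_cast; linarith only [hcase]) (by omega)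
      have hIocsuf : Finset.Icc (l+1) n = Finset.Ioc l n := by
        ext x; simp [Finset.mem_Icc, Finset.mem_Ioc]
      rw [hIocsuf] at hsuf'
      have hptotal : (∑ i ∈ Finset.Ioc 0 l, p i) + ∑ i ∈ Finset.Ioc l n, p i = 1 := by
        rw [Finset.sum_Ioc_consecutive p (Nat.zero_le l) hl2.le, ← hIoc, hpsum]
      have hcast : ((n:ℝ) - (↑(l+1)) + 1) = (n:ℝ) - l := by push_cast; ring
      rw [hcast] at hsuf'
      have hwle : w l ≤ δ/(1-δ)*((n:ℝ)-l) := min_le_right _ _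
      have hb : (ε/n) * w l ≤ (ε/n) * (δ/(1-δ)*((n:ℝ)-l)) := mul_le_mul_of_nonneg_left hwle hεn
      rw [hqsum]
      have key : (∑ i ∈ Finset.Ioc 0 l, p i) - (l:ℝ)/n
          ≤ -(ε/n) * (δ/(1-δ)*((n:ℝ)-l)) := by
        have expand : 1 - (1 + ε*δ/(1-δ)) * ((n:ℝ)-l)/n - (l:ℝ)/n
            = -(ε/n) * (δ/(1-δ)*((n:ℝ)-l)) := by
          field_simp
          ring
        linarith only [hsuf', hptotal, expand.le, expand.ge]
      linarith only [key, hb]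
  -- combine
  have hsum1 : ∑ l ∈ Finset.Ico 1 n, (∑ i ∈ Finset.Ioc 0 l, q i) * (f l - f (l+1))
      ≤ ∑ l ∈ Finset.Ico 1 n, (-(ε/n) * w l) * (f l - f (l+1)) := by
    apply Finset.sum_le_sum
    intro l hl
    rcases Finset.mem_Ico.1 hl with ⟨hl1, hl2⟩
    exact mul_le_mul_of_nonneg_right (hP l hl) (hd l hl1 hl2)
  have hsum2 : ∑ l ∈ Finset.Ico 1 n, (-(ε/n) * w l) * (f l - f (l+1))
      = -(ε/n) * ∑ l ∈ Finset.Ico 1 n, w l * (f l - f (l+1)) := by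
    rw [Finset.mul_sum]
    apply Finset.sum_congr rfl
    intro l hl
    ring
  -- final chain
  have hcore' : δ/4 * (∑ i ∈ Finset.Ioc 0 n, (exp (z i) + exp (-(z i)))) - (δ/(1-δ)+5)*n
      ≤ ∑ l ∈ Finset.Ico 1 n, w l * (f l - f (l+1)) := by linarith only [hcore]
  have hstep : -(ε/n) * ∑ l ∈ Finset.Ico 1 n, w l * (f l - f (l+1))
      ≤ -(ε/n) * (δ/4 * (∑ i ∈ Finset.Ioc 0 n, (exp (z i) + exp (-(z i)))) - (δ/(1-δ)+5)*n) := by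
    have := mul_le_mul_of_nonneg_left hcore' hεn
    linarith only [this]
  have hchain : ∑ i ∈ Finset.Ioc 0 n, f i * q i
      ≤ -(ε/n) * (δ/4 * (∑ i ∈ Finset.Ioc 0 n, (exp (z i) + exp (-(z i)))) - (δ/(1-δ)+5)*n) := by
    rw [habel]
    calc ∑ l ∈ Finset.Ico 1 n, (∑ i ∈ Finset.Ioc 0 l, q i) * (f l - f (l+1))
        ≤ ∑ l ∈ Finset.Ico 1 n, (-(ε/n) * w l) * (f l - f (l+1)) := hsum1
      _ = -(ε/n) * ∑ l ∈ Finset.Ico 1 n, w l * (f l - f (l+1)) := hsum2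
      _ ≤ _ := hstep
  have hmulγ := mul_le_mul_of_nonneg_left hchain hγ1.le
  have hG : ∑ i ∈ Finset.Icc 1 n, (Real.exp (γ * y i) + Real.exp (-(γ * y i)))
      = ∑ i ∈ Finset.Ioc 0 n, (exp (z i) + exp (-(z i))) := by
    rw [← hIoc]
  rw [hG]
  have hfinal : γ * (-(ε/n) * (δ/4 * (∑ i ∈ Finset.Ioc 0 n, (exp (z i) + exp (-(z i)))) - (δ/(1-δ)+5)*n))
      = -(∑ i ∈ Finset.Ioc 0 n, (exp (z i) + exp (-(z i)))) * γ * ε * δ / (4 * n)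
        + (δ/(1-δ) + 5) * γ * ε := by
    field_simp
    ring
  linarith only [hmulγ, hfinal.le, hfinal.ge]
end

section
/- Let Y ~ Binomial(b, p) with b·p ≤ C·b/n for p ≤ C/n, let γ ∈ (0, min{1, n/(2Cb)}] with C > 1, b ≥ n, and let Z = Y - b/n. Then E[e^{±γZ}] ≤ 1 ± (p - 1/n)·b·γ + (5C²b/n)·b·γ²/n. -/
/-!
Bounding `1 + x ≤ eˣ` termwise gives `(1 - p + p eˢ)ᵇ e^{-sb/n} ≤ exp(b(p(eˢ - 1) - s/n))`, and the
second-order Taylor bound `eˢ ≤ 1 + s + s²` puts the exponent below `a + c` with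
`a = (p - 1/n) b s` and `0 ≤ c = p b s²`. With `X = C b γ / n ≤ 1/2` one has `|a| ≤ X` and `c ≤ X²`
(as `C b / n ≥ 1`), so the exponent is at most `2X ≤ 1` in absolute value and a second use of
`eᵛ ≤ 1 + v + v²` gives `1 + a + X² + (2X)² = 1 + a + 5X²`.
-/

open Real

lemma one_add_pow_le_exp_mul {x : ℝ} (hx : -1 ≤ x) (b : ℕ) : (1 + x) ^ b ≤ exp (b * x) := by
  calc (1 + x) ^ b ≤ exp x ^ b := by
        gcongr
        · linarith
        · linarith [add_one_le_exp x]
    _ = exp (b * x) := (exp_nat_mul x b).symm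

lemma exp_le_one_add_add_sq {x : ℝ} (hx : |x| ≤ 1) : exp x ≤ 1 + x + x ^ 2 := by
  linarith [(abs_le.mp (abs_exp_sub_one_sub_id_le hx)).2]

lemma one_sub_add_mul_exp_pow_mul_exp_le {p r s : ℝ} (hp : 0 ≤ p) (hps : p * |s| ≤ 1)
    (hs : |s| ≤ 1) (b : ℕ) :
    (1 - p + p * exp s) ^ b * exp (-(s * b / r)) ≤ exp ((p - 1 / r) * b * s + p * b * s ^ 2) := by
  have hexp : exp s - 1 ≤ s + s ^ 2 := by linarith [exp_le_one_add_add_sq hs]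
  have hbase : -1 ≤ p * (exp s - 1) := by
    nlinarith [add_one_le_exp s, neg_abs_le s]
  calc (1 - p + p * exp s) ^ b * exp (-(s * b / r))
      = (1 + p * (exp s - 1)) ^ b * exp (-(s * b / r)) := by ring_nf
    _ ≤ exp (b * (p * (exp s - 1))) * exp (-(s * b / r)) := by
        gcongr
        exact one_add_pow_le_exp_mul hbase b
    _ = exp (b * p * (exp s - 1) - s * b / r) := by rw [← exp_add]; ring_nf
    _ ≤ exp (b * p * (s + s ^ 2) - s * b / r) := by gcongr
    _ = exp ((p - 1 / r) * b * s + p * b * s ^ 2) := by ring_nf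

lemma exp_add_le_one_add_add_five_mul_sq {a c X : ℝ} (ha : |a| ≤ X) (hc₀ : 0 ≤ c)
    (hc : c ≤ X ^ 2) (hX : X ≤ 1 / 2) :
    exp (a + c) ≤ 1 + a + 5 * X ^ 2 := by
  obtain ⟨ha₁, ha₂⟩ := abs_le.mp ha
  have hX₀ : 0 ≤ X := (abs_nonneg a).trans ha
  have hac : |a + c| ≤ 2 * X := abs_le.mpr ⟨by nlinarith, by nlinarith⟩
  calc exp (a + c) ≤ 1 + (a + c) + (a + c) ^ 2 :=
        exp_le_one_add_add_sq (hac.trans (by linarith))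
    _ ≤ 1 + a + X ^ 2 + (2 * X) ^ 2 := by
        linarith [sq_le_sq' (abs_le.mp hac).1 (abs_le.mp hac).2]
    _ = 1 + a + 5 * X ^ 2 := by ring

lemma batched_mgf_le_of_abs_le {b : ℕ} {n C p γ s : ℝ} (hn : 0 < n) (hb : n ≤ b) (hC : 1 ≤ C)
    (hp₀ : 0 ≤ p) (hpC : p ≤ C / n) (hγ : γ ≤ n / (2 * C * b)) (hs : |s| ≤ γ) :
    (1 - p + p * exp s) ^ b * exp (-(s * b / n)) ≤
      1 + (p - 1 / n) * b * s + (5 * C ^ 2 * b / n) * b * γ ^ 2 / n := by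
  set X := C * b * γ / n with hXdef
  have hb₀ : 0 < (b : ℝ) := hn.trans_le hb
  have hb₁ : 1 ≤ (b : ℝ) := Nat.one_le_cast.mpr (Nat.cast_pos.mp hb₀)
  have hγ₀ : 0 ≤ γ := (abs_nonneg s).trans hs
  have hX : X ≤ 1 / 2 := by
    rw [le_div_iff₀ (by positivity)] at hγ
    rw [hXdef, div_le_iff₀ hn]
    linarith
  have hCb : 1 ≤ C * b / n := by rw [le_div_iff₀ hn]; nlinarith
  have hγX : γ ≤ X := by
    rw [hXdef, mul_div_right_comm]
    exact le_mul_of_one_le_left hγ₀ hCb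
  have hpγ : p * γ ≤ X := by
    calc p * γ ≤ C / n * γ := by gcongr
      _ ≤ C / n * b * γ := by gcongr; exact le_mul_of_one_le_right (by positivity) hb₁
      _ = X := by ring
  have hq : |p - 1 / n| ≤ C / n := by
    have : 1 / n ≤ C / n := by gcongr
    rw [abs_le]; constructor <;> linarith [one_div_pos.mpr hn]
  have hs₂ : s ^ 2 ≤ γ ^ 2 := sq_le_sq' (abs_le.mp hs).1 (abs_le.mp hs).2
  have ha : |(p - 1 / n) * b * s| ≤ X := by
    rw [abs_mul, abs_mul, Nat.abs_cast]
    calc |p - 1 / n| * b * |s| ≤ C / n * b * γ := by gcongr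
      _ = X := by ring
  have hc : p * b * s ^ 2 ≤ X ^ 2 := by
    calc p * b * s ^ 2 ≤ C / n * b * γ ^ 2 := by gcongr
      _ ≤ C / n * b * γ ^ 2 * (C * b / n) := le_mul_of_one_le_right (by positivity) hCb
      _ = X ^ 2 := by ring
  calc (1 - p + p * exp s) ^ b * exp (-(s * b / n))
      ≤ exp ((p - 1 / n) * b * s + p * b * s ^ 2) :=
        one_sub_add_mul_exp_pow_mul_exp_le hp₀
          (by linarith [mul_le_mul_of_nonneg_left hs hp₀]) (by linarith) b
    _ ≤ 1 + (p - 1 / n) * b * s + 5 * X ^ 2 :=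
        exp_add_le_one_add_add_five_mul_sq ha (by positivity) hc hX
    _ = 1 + (p - 1 / n) * b * s + (5 * C ^ 2 * b / n) * b * γ ^ 2 / n := by ring

theorem batched_mgf_bound_general
    (b n : ℕ) (hn : 0 < n) (hb : n ≤ b) (C p γ : ℝ)
    (hC : 1 < C) (hp0 : 0 ≤ p) (hpC : p ≤ C / n)
    (hγ0 : 0 < γ) (hγ2 : γ ≤ n / (2 * C * b)) :
    ((1 - p + p * Real.exp γ)^b * Real.exp (-(γ * b / n)) ≤
      1 + (p - 1 / n) * b * γ + (5 * C^2 * b / n) * b * γ^2 / n) ∧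
    ((1 - p + p * Real.exp (-γ))^b * Real.exp (γ * b / n) ≤
      1 - (p - 1 / n) * b * γ + (5 * C^2 * b / n) * b * γ^2 / n) := by
  have hnR : (0 : ℝ) < n := Nat.cast_pos.mpr hn
  have hbR : (n : ℝ) ≤ b := Nat.cast_le.mpr hb
  refine ⟨batched_mgf_le_of_abs_le hnR hbR hC.le hp0 hpC hγ2 (abs_of_pos hγ0).le, ?_⟩
  have h := batched_mgf_le_of_abs_le hnR hbR hC.le hp0 hpC hγ2 (abs_neg γ ▸ abs_of_pos hγ0).le
  rw [neg_mul, neg_div, neg_neg] at h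
  linarith

/-- MGF bound for the batched setting. If Y ~ Binomial(b, p) and
Z = Y - b/n, then E[e^{±γZ}] = (1 - p + p·e^{±γ})^b · e^{∓γb/n} is bounded by
1 ± (p - 1/n)·b·γ + (5C²b/n)·b·γ²/n, for p ≤ C/n, b ≥ n and γ ≤ min{1, n/(2Cb)}. -/
theorem batched_mgf_bound
    (b n : ℕ) (hn : 0 < n) (hb : n ≤ b) (C p γ : ℝ)
    (hC : 1 < C) (hp0 : 0 ≤ p) (hpC : p ≤ C / n)
    (hγ0 : 0 < γ) (hγ1 : γ ≤ 1) (hγ2 : γ ≤ n / (2 * C * b)) :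
    ((1 - p + p * Real.exp γ)^b * Real.exp (-(γ * b / n)) ≤
      1 + (p - 1 / n) * b * γ + (5 * C^2 * b / n) * b * γ^2 / n) ∧
    ((1 - p + p * Real.exp (-γ))^b * Real.exp (γ * b / n) ≤
      1 - (p - 1 / n) * b * γ + (5 * C^2 * b / n) * b * γ^2 / n) :=
  batched_mgf_bound_general b n hn hb C p γ hC hp0 hpC hγ0 hγ2
end
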